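/- Let H be a Hilbert space, T : H → H an isometry (or unitary), f ∈ H, and E ⊆ ℕ a set such that E - E is syndetic in ℕ and ‖Tⁿf - f‖ < ε/4 for all n ∈ E, for every ε > 0 with suitable E = E(ε). Then the orbit closure {Tⁿf : n ∈ ℕ} is totally bounded, hence its closure is compact in the norm topology. More precisely: if for every ε > 0 there is a set E ⊆ ℕ with E - E syndetic and ‖Tⁿf - f‖ < ε/4 for all n ∈ E, then the closure of {Tⁿf : n ∈ ℕ} is compact. -/

import Mathlib

/-!
For an isometry `g`, the distance between two orbit points `gᵐx`, `gᵐ'x` is unchanged by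
shifting both times by the same amount. Hence, if `gⁿx` returns `ε/2`-close to `x` for all `n`
in a syndetic set `S` with witnesses `F`, then all `gᵐx` with `m + n ∈ S` lie within `ε` of each
other, so one orbit point per `n ∈ F` gives a finite `ε`-net of the orbit. Returns along
`E - E` are controlled by returns along `E` through the same shift invariance.
-/

/-- `S ⊆ ℕ` is syndetic: finitely many translates `-n + S` cover `ℕ`. -/
def Syndetic (S : Set ℕ) : Prop :=
  ∃ F : Finset ℕ, ∀ m : ℕ, ∃ n ∈ F, m + n ∈ S

/-- The difference set `E - E = {n : ∃ a ∈ E, a + n ∈ E}`. -/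
def diffSet (E : Set ℕ) : Set ℕ := {n | ∃ a ∈ E, a + n ∈ E}

namespace Isometry

variable {α : Type*} [PseudoMetricSpace α] {g : α → α}

protected theorem iterate (hg : Isometry g) : ∀ n : ℕ, Isometry g^[n]
  | 0 => isometry_id
  | n + 1 => (hg.iterate n).comp hg

theorem dist_iterate_add_iterate_add (hg : Isometry g) (x : α) (k m m' : ℕ) :
    dist (g^[k + m] x) (g^[k + m'] x) = dist (g^[m] x) (g^[m'] x) := by
  simp only [Function.iterate_add_apply, (hg.iterate k).dist_eq]

theorem dist_iterate_lt_of_mem_diffSet (hg : Isometry g) {x : α} {E : Set ℕ} {r : ℝ}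
    (hE : ∀ n ∈ E, dist (g^[n] x) x < r) {n : ℕ} (hn : n ∈ diffSet E) :
    dist (g^[n] x) x < r + r := by
  obtain ⟨a, ha, han⟩ := hn
  calc dist (g^[n] x) x = dist (g^[a + n] x) (g^[a + 0] x) := by
        rw [hg.dist_iterate_add_iterate_add, Function.iterate_zero_apply]
    _ ≤ dist (g^[a + n] x) x + dist (g^[a] x) x := dist_triangle_right _ _ _
    _ < r + r := add_lt_add (hE _ han) (hE _ ha)

theorem dist_iterate_lt_of_add_mem (hg : Isometry g) {x : α} {S : Set ℕ} {r : ℝ}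
    (hS : ∀ n ∈ S, dist (g^[n] x) x < r) {m m' n : ℕ} (hm : m + n ∈ S) (hm' : m' + n ∈ S) :
    dist (g^[m] x) (g^[m'] x) < r + r :=
  calc dist (g^[m] x) (g^[m'] x) = dist (g^[n + m] x) (g^[n + m'] x) :=
        (hg.dist_iterate_add_iterate_add x n m m').symm
    _ ≤ dist (g^[n + m] x) x + dist (g^[n + m'] x) x := dist_triangle_right _ _ _
    _ < r + r := by
        rw [add_comm n m, add_comm n m']
        exact add_lt_add (hS _ hm) (hS _ hm')

theorem totallyBounded_range_iterate_of_syndetic (hg : Isometry g) (x : α)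
    (h : ∀ ε > 0, ∃ S : Set ℕ, Syndetic S ∧ ∀ n ∈ S, dist (g^[n] x) x < ε) :
    TotallyBounded (Set.range fun n : ℕ => g^[n] x) := by
  rw [Metric.totallyBounded_iff]
  intro ε hε
  obtain ⟨S, ⟨F, hF⟩, hS⟩ := h (ε / 2) (half_pos hε)
  have hwitness : ∀ n, ∃ m₀, ∀ m, m + n ∈ S → m₀ + n ∈ S := fun n =>
    (em (∃ m, m + n ∈ S)).elim (fun ⟨m₀, hm₀⟩ => ⟨m₀, fun _ _ => hm₀⟩)
      (fun hn => ⟨0, fun m hm => (hn ⟨m, hm⟩).elim⟩)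
  choose m₀ hm₀ using hwitness
  refine ⟨(fun n => g^[m₀ n] x) '' F, F.finite_toSet.image _, ?_⟩
  rintro _ ⟨m, rfl⟩
  obtain ⟨n, hnF, hmn⟩ := hF m
  refine Set.mem_biUnion (Set.mem_image_of_mem _ hnF) (Metric.mem_ball.2 ?_)
  simpa only [add_halves] using hg.dist_iterate_lt_of_add_mem hS hmn (hm₀ n m hmn)

end Isometry

/-- If for every `ε > 0` there is `E ⊆ ℕ` with `E - E` syndetic and
`‖Tⁿf - f‖ < ε/4` for all `n ∈ E`, then the orbit closure of `f` is compact. -/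
theorem orbit_closure_compact {H : Type*} [NormedAddCommGroup H]
    [InnerProductSpace ℝ H] [CompleteSpace H]
    (T : H →ₗᵢ[ℝ] H) (f : H)
    (h : ∀ ε : ℝ, 0 < ε → ∃ E : Set ℕ, Syndetic (diffSet E) ∧
      ∀ n ∈ E, ‖(⇑T)^[n] f - f‖ < ε / 4) :
    IsCompact (closure (Set.range fun n : ℕ => (⇑T)^[n] f)) := by
  refine (T.isometry.totallyBounded_range_iterate_of_syndetic f fun ε hε => ?_).closure
    |>.isCompact_of_isClosed isClosed_closure
  obtain ⟨E, hsyn, hE⟩ := h ε hε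
  refine ⟨diffSet E, hsyn, fun n hn => ?_⟩
  have hreturn := T.isometry.dist_iterate_lt_of_mem_diffSet
    (fun k hk => (dist_eq_norm _ _).trans_lt (hE k hk)) hn
  linarith
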